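/- Let μ be a Borel probability measure on ℝ^d such that for each sufficiently large m and each Borel set B with μ(B) ≥ m^{−2}, there exists a Borel probability measure ν supported on B with H(ν, D_m) ≥ αm, where D_m is the partition into dyadic cubes of side 2^{−m} and H denotes Shannon entropy. Then every Borel set A with μ(A) > 0 has Hausdorff dimension at least α. -/

import Mathlib

open MeasureTheory ENNReal

/-- The half-open dyadic cube of side `2^{-j}` in `ℝ^d` indexed by `k : Fin d → ℤ`. -/
def dyCube (d j : ℕ) (k : Fin d → ℤ) : Set (EuclideanSpace ℝ (Fin d)) :=
  {x | ∀ i, (k i : ℝ) / 2 ^ j ≤ x i ∧ x i < ((k i : ℝ) + 1) / 2 ^ j}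

/-- The base-2 Shannon entropy of `ν` with respect to the partition into dyadic cubes of
side `2^{-m}`. -/
noncomputable def dyEntropy (d m : ℕ) (ν : Measure (EuclideanSpace ℝ (Fin d))) : ℝ :=
  ∑' k : Fin d → ℤ,
    -((ν (dyCube d m k)).toReal * Real.logb 2 (ν (dyCube d m k)).toReal)

/-! If `dimH A < s < α`, then `μH[s] A = 0`, so `A` is covered by sets `Uₙ` of small diameter
with `∑ diam (Uₙ) ^ s` small. Sorted by dyadic scale, at most about `2 ^ (s m)` of the `Uₙ` have
diameter comparable to `2 ^ (-m)`, and each of them meets at most `3 ^ d` cubes of `D_m`. Hence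
`A ⊆ ⋃_{m ≥ M} B_m` with `B_m` a union of `O(3 ^ d 2 ^ (s m))` cubes of `D_m`. Since `∑ m⁻²`
converges, some `B_m` has `μ B_m ≥ m⁻²`, while every probability measure carried by `B_m` has
entropy at most `log₂ #cubes ≤ s m + O(d) < α m`. -/

open Metric Filter

noncomputable def dyIdx (d m : ℕ) (x : EuclideanSpace ℝ (Fin d)) : Fin d → ℤ :=
  fun i => ⌊2 ^ m * x i⌋

section Dyadic

variable {d m : ℕ}

lemma mem_dyCube_iff {k : Fin d → ℤ} {x : EuclideanSpace ℝ (Fin d)} :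
    x ∈ dyCube d m k ↔ dyIdx d m x = k := by
  have h2m : (0 : ℝ) < 2 ^ m := by positivity
  simp only [dyCube, Set.mem_ofPred_eq, funext_iff, dyIdx, div_le_iff₀' h2m, lt_div_iff₀' h2m]
  exact forall_congr' fun _ => Int.floor_eq_iff.symm

lemma mem_dyCube_dyIdx (x : EuclideanSpace ℝ (Fin d)) : x ∈ dyCube d m (dyIdx d m x) :=
  mem_dyCube_iff.mpr rfl

lemma pairwise_disjoint_dyCube : Pairwise (Function.onFun Disjoint (dyCube d m)) :=
  fun _ _ hkl => Set.disjoint_left.mpr fun _ hk hl =>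
    hkl ((mem_dyCube_iff.mp hk).symm.trans (mem_dyCube_iff.mp hl))

lemma measurableSet_dyCube (k : Fin d → ℤ) : MeasurableSet (dyCube d m k) := by
  have hidx : Measurable (dyIdx d m) := by unfold dyIdx; fun_prop
  simpa only [Set.preimage, Set.mem_singleton_iff, ← mem_dyCube_iff, Set.ofPred_mem_eq] using
    hidx (measurableSet_singleton k)

lemma dyIdx_mem_Icc_of_dist_le {y z : EuclideanSpace ℝ (Fin d)} (h : dist z y ≤ (2 ^ m)⁻¹) :
    dyIdx d m z ∈ Finset.Icc (dyIdx d m y - 1) (dyIdx d m y + 1) := by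
  have h2m : (0 : ℝ) < 2 ^ m := by positivity
  simp only [Finset.mem_Icc, Pi.le_def, Pi.sub_apply, Pi.add_apply, Pi.one_apply, dyIdx,
    ← forall_and]
  intro i
  have hi : |2 ^ m * z i - 2 ^ m * y i| ≤ 1 := by
    rw [← mul_sub, abs_mul, abs_of_pos h2m, ← le_div_iff₀' h2m, one_div, ← Real.dist_eq]
    exact (PiLp.dist_apply_le z y i).trans h
  obtain ⟨hlo, hhi⟩ := abs_le.mp hi
  constructor
  · have := Int.floor_le_floor (show 2 ^ m * y i ≤ 2 ^ m * z i + 1 by linarith)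
    rw [Int.floor_add_one] at this
    omega
  · have := Int.floor_le_floor (show 2 ^ m * z i ≤ 2 ^ m * y i + 1 by linarith)
    rwa [Int.floor_add_one] at this

lemma card_Icc_dyIdx (y : EuclideanSpace ℝ (Fin d)) :
    (Finset.Icc (dyIdx d m y - 1) (dyIdx d m y + 1)).card = 3 ^ d := by
  simp only [Pi.card_Icc, Pi.sub_apply, Pi.add_apply, Pi.one_apply, Int.card_Icc]
  simp [show ∀ a : ℤ, a + 1 + 1 - (a - 1) = 3 by intro a; ring]

end Dyadic

lemma sum_negMulLog_le_log_card {ι : Type*} (K : Finset ι) (p : ι → ℝ)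
    (h0 : ∀ k ∈ K, 0 ≤ p k) (h1 : ∑ k ∈ K, p k = 1) :
    ∑ k ∈ K, Real.negMulLog (p k) ≤ Real.log K.card := by
  have hK : (0 : ℝ) < K.card := by
    rcases K.eq_empty_or_nonempty with rfl | hne
    · simp at h1
    · exact_mod_cast hne.card_pos
  have hjensen := Real.concaveOn_negMulLog.le_map_sum (t := K) (w := fun _ => (K.card : ℝ)⁻¹)
    (p := p) (fun _ _ => by positivity) (by simp [hK.ne']) (fun k hk => h0 k hk)
  simp only [smul_eq_mul, ← Finset.mul_sum, h1, mul_one] at hjensen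
  have hlog : Real.negMulLog (K.card : ℝ)⁻¹ = (K.card : ℝ)⁻¹ * Real.log K.card := by
    simp [Real.negMulLog, Real.log_inv]
  exact le_of_mul_le_mul_left (hlog ▸ hjensen) (inv_pos.mpr hK)

lemma dyEntropy_le_logb_of_card_le {d m : ℕ} {ν : Measure (EuclideanSpace ℝ (Fin d))}
    [IsProbabilityMeasure ν] {K : Finset (Fin d → ℤ)} (hν : ν (⋃ k ∈ K, dyCube d m k)ᶜ = 0)
    {N : ℝ} (hN : (K.card : ℝ) ≤ N) :
    dyEntropy d m ν ≤ Real.logb 2 N := by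
  set p : (Fin d → ℤ) → ℝ := fun k => (ν (dyCube d m k)).toReal
  have hout : ∀ k ∉ K, ν (dyCube d m k) = 0 := by
    intro k hk
    have hsub : dyCube d m k ⊆ (⋃ l ∈ K, dyCube d m l)ᶜ := by
      simp only [Set.subset_compl_iff_disjoint_right, Set.disjoint_iUnion_right]
      exact fun l hl => pairwise_disjoint_dyCube (ne_of_mem_of_not_mem hl hk).symm
    exact measure_mono_null hsub hν
  have hsum : ∑ k ∈ K, p k = 1 := by
    rw [prob_compl_eq_zero_iff (K.measurableSet_biUnion fun k _ => measurableSet_dyCube k),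
      measure_biUnion_finset (pairwise_disjoint_dyCube.set_pairwise _)
        (fun k _ => measurableSet_dyCube k)] at hν
    rw [← ENNReal.toReal_sum (fun k _ => measure_ne_top ν _), hν, toReal_one]
  have hK : (0 : ℝ) < K.card := by
    rcases K.eq_empty_or_nonempty with rfl | hne
    · simp at hsum
    · exact_mod_cast hne.card_pos
  calc dyEntropy d m ν = (∑ k ∈ K, Real.negMulLog (p k)) / Real.log 2 := by
        rw [dyEntropy, tsum_eq_sum (s := K) (fun k hk => by simp [hout k hk]), Finset.sum_div]
        simp [Real.negMulLog, Real.logb, p, neg_div, mul_div_assoc]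
    _ ≤ Real.log K.card / Real.log 2 := by
        gcongr
        exact sum_negMulLog_le_log_card K p (fun _ _ => toReal_nonneg) hsum
    _ ≤ Real.logb 2 N := Real.logb_le_logb_of_le one_lt_two hK hN

lemma exists_cover_tsum_lt_of_hausdorffMeasure_eq_zero {X : Type*} [EMetricSpace X]
    [MeasurableSpace X] [BorelSpace X] {s : ℝ} {A : Set X} (hA : μH[s] A = 0)
    {r ε : ℝ≥0∞} (hr : 0 < r) (hε : 0 < ε) :
    ∃ U : ℕ → Set X, A ⊆ ⋃ n, U n ∧ (∀ n, ediam (U n) ≤ r) ∧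
      ∑' n, ⨆ _ : (U n).Nonempty, ediam (U n) ^ s < ε := by
  have hcover : (⨅ (U : ℕ → Set X) (_ : A ⊆ ⋃ n, U n) (_ : ∀ n, ediam (U n) ≤ r),
      ∑' n, ⨆ _ : (U n).Nonempty, ediam (U n) ^ s) = 0 := by
    refine nonpos_iff_eq_zero.mp (hA ▸ ?_)
    rw [Measure.hausdorffMeasure_apply]
    exact le_iSup₂ (f := fun r (_ : 0 < r) => ⨅ (U : ℕ → Set X) (_ : A ⊆ ⋃ n, U n)
      (_ : ∀ n, ediam (U n) ≤ r), ∑' n, ⨆ _ : (U n).Nonempty, ediam (U n) ^ s) r hr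
  rw [← hcover] at hε
  simpa only [iInf_lt_iff, exists_prop] using hε

lemma exists_dyadic_band {a : ℝ≥0∞} {M : ℕ} (ha0 : a ≠ 0) (ha : a ≤ ENNReal.ofReal (2 ^ M)⁻¹) :
    ∃ m, M ≤ m ∧ ENNReal.ofReal (2 ^ (m + 1))⁻¹ < a ∧ a ≤ ENNReal.ofReal (2 ^ m)⁻¹ := by
  have hatop : a ≠ ∞ := ne_top_of_le_ne_top ofReal_ne_top ha
  have hpos : 0 < a.toReal := toReal_pos ha0 hatop
  rw [← ofReal_toReal hatop, ofReal_le_ofReal_iff (by positivity),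
    le_inv_comm₀ hpos (by positivity)] at ha
  obtain ⟨m, hle, hlt⟩ := exists_nat_pow_near (one_le_pow₀ one_le_two |>.trans ha) one_lt_two
  refine ⟨m, ?_, ?_, ?_⟩
  · exact Nat.lt_succ_iff.mp
      ((pow_lt_pow_iff_right₀ (one_lt_two : (1 : ℝ) < 2)).mp (ha.trans_lt hlt))
  · rw [← ofReal_toReal hatop, ENNReal.ofReal_lt_ofReal_iff hpos]
    exact (inv_lt_comm₀ hpos (by positivity)).mp hlt
  · rw [← ofReal_toReal hatop]
    exact ofReal_le_ofReal ((le_inv_comm₀ hpos (by positivity)).mpr hle)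

lemma exists_le_measure_of_tsum_tail_lt {α : Type*} [MeasurableSpace α] (μ : Measure α)
    {A : Set α} {B : ℕ → Set α} {M : ℕ} (hAB : A ⊆ ⋃ m ≥ M, B m) {w : ℕ → ℝ≥0∞}
    (hw : ∑' j, w (j + M) < μ A) : ∃ m ≥ M, w m ≤ μ (B m) := by
  have hAB' : A ⊆ ⋃ j, B (j + M) := by
    intro x hx
    obtain ⟨m, hm, hxm⟩ := by simpa only [Set.mem_iUnion, exists_prop] using hAB hx
    exact Set.mem_iUnion.mpr ⟨m - M, by rwa [Nat.sub_add_cancel hm]⟩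
  by_contra! h
  refine (measure_mono hAB' |>.trans (measure_iUnion_le _) |>.trans ?_).not_gt hw
  exact ENNReal.tsum_le_tsum fun j => (h (j + M) (Nat.le_add_left M j)).le

lemma exists_finset_ediam_gt_of_tsum_le {X : Type*} [PseudoEMetricSpace X] {s : ℝ} (hs : 0 ≤ s)
    {U : ℕ → Set X}
    (hsum : ∑' n, ⨆ _ : (U n).Nonempty, ediam (U n) ^ s ≤ ENNReal.ofReal (2 ^ (-s))) (m : ℕ) :
    ∃ J : Finset ℕ, (J.card : ℝ) ≤ 2 ^ (s * m) ∧
      ∀ n, (U n).Nonempty → ENNReal.ofReal (2 ^ (m + 1))⁻¹ < ediam (U n) → n ∈ J := by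
  have hc : ENNReal.ofReal (2 ^ (m + 1))⁻¹ ^ s = ENNReal.ofReal (2 ^ (-(s * (m + 1)))) := by
    rw [ENNReal.ofReal_rpow_of_nonneg (by positivity) hs, Real.inv_rpow (by positivity),
      ← Real.rpow_natCast, ← Real.rpow_mul zero_le_two, Real.rpow_neg zero_le_two]
    push_cast
    ring_nf
  obtain ⟨hfin, hcard⟩ := ENNReal.finset_card_const_le_le_of_tsum_le ofReal_ne_top hsum
    (ε := ENNReal.ofReal (2 ^ (-(s * (m + 1))))) (ENNReal.ofReal_pos.mpr (by positivity)).ne'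
  refine ⟨hfin.toFinset, ?_, fun n hn hdiam => hfin.mem_toFinset.mpr ?_⟩
  · rw [← ENNReal.ofReal_div_of_pos (by positivity), ← Real.rpow_sub two_pos,
      ← ENNReal.ofReal_natCast, ofReal_le_ofReal_iff (by positivity)] at hcard
    convert hcard using 2
    ring
  · rw [Set.mem_ofPred_eq, iSup_pos hn, ← hc]
    exact ENNReal.rpow_le_rpow hdiam.le hs

lemma exists_dyadic_scale {X : Type*} [PseudoEMetricSpace X] {s : ℝ} (hs : 0 ≤ s) {M : ℕ}
    {U : ℕ → Set X} (hdiam : ∀ n, ediam (U n) ≤ ENNReal.ofReal (2 ^ M)⁻¹)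
    (hsum : ∑' n, ⨆ _ : (U n).Nonempty, ediam (U n) ^ s ≤ ENNReal.ofReal (2 ^ (-s))) :
    ∃ (f : ℕ → ℕ) (I : ℕ → Finset ℕ),
      (∀ n, M ≤ f n ∧ ediam (U n) ≤ ENNReal.ofReal (2 ^ f n)⁻¹) ∧
      (∀ m, ((I m).card : ℝ) ≤ 2 ^ (s * m) + 1) ∧ ∀ n, (U n).Nonempty → n ∈ I (f n) := by
  -- A set of diameter zero lies in no dyadic band; the `n`-th one gets the scale `n + M` alone.
  have hband : ∀ n, ∃ m, M ≤ m ∧ ediam (U n) ≤ ENNReal.ofReal (2 ^ m)⁻¹ ∧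
      (m = n + M ∨ ENNReal.ofReal (2 ^ (m + 1))⁻¹ < ediam (U n)) := by
    intro n
    rcases eq_or_ne (ediam (U n)) 0 with h0 | h0
    · exact ⟨n + M, Nat.le_add_left M n, by simp [h0], .inl rfl⟩
    · obtain ⟨m, hMm, hlt, hle⟩ := exists_dyadic_band h0 (hdiam n)
      exact ⟨m, hMm, hle, .inr hlt⟩
  choose f hfM hfdiam hfband using hband
  choose J hJcard hJ using exists_finset_ediam_gt_of_tsum_le hs hsum
  refine ⟨f, fun m => J m ∪ {m - M}, fun n => ⟨hfM n, hfdiam n⟩, fun m => ?_, fun n hn => ?_⟩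
  · calc (((J m ∪ {m - M}).card : ℕ) : ℝ) ≤ (J m).card + 1 := by
          exact_mod_cast (Finset.card_union_le _ _).trans (by simp)
      _ ≤ 2 ^ (s * m) + 1 := by gcongr; exact hJcard m
  · rcases hfband n with h | h
    · exact Finset.mem_union_right _ (by simp [h])
    · exact Finset.mem_union_left _ (hJ _ n hn h)

theorem exists_dyCube_cover_of_hausdorffMeasure_eq_zero {d : ℕ} {s : ℝ} (hs : 0 ≤ s)
    {A : Set (EuclideanSpace ℝ (Fin d))} (hA : μH[s] A = 0) (M : ℕ) :
    ∃ K : ℕ → Finset (Fin d → ℤ), (∀ m, ((K m).card : ℝ) ≤ 2 * 3 ^ d * 2 ^ (s * m)) ∧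
      A ⊆ ⋃ m ≥ M, ⋃ k ∈ K m, dyCube d m k := by
  obtain ⟨U, hAU, hUdiam, hUsum⟩ := exists_cover_tsum_lt_of_hausdorffMeasure_eq_zero hA
    (r := ENNReal.ofReal (2 ^ M)⁻¹) (ε := ENNReal.ofReal (2 ^ (-s)))
    (ENNReal.ofReal_pos.mpr (by positivity)) (ENNReal.ofReal_pos.mpr (by positivity))
  obtain ⟨f, I, hf, hIcard, hI⟩ := exists_dyadic_scale hs hUdiam hUsum.le
  choose! y hy using fun n (hn : (U n).Nonempty) => hn
  refine ⟨fun m => (I m).biUnion fun n => Finset.Icc (dyIdx d m (y n) - 1) (dyIdx d m (y n) + 1),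
    fun m => ?_, fun x hx => ?_⟩
  · have h1 : (1 : ℝ) ≤ 2 ^ (s * m) := Real.one_le_rpow one_le_two (by positivity)
    calc _ ≤ ((∑ n ∈ I m, (Finset.Icc (dyIdx d m (y n) - 1) (dyIdx d m (y n) + 1)).card : ℕ)
          : ℝ) := by exact_mod_cast Finset.card_biUnion_le
      _ = (I m).card * 3 ^ d := by simp [card_Icc_dyIdx]
      _ ≤ (2 ^ (s * m) + 1) * 3 ^ d := by gcongr; exact hIcard m
      _ ≤ 2 * 3 ^ d * 2 ^ (s * m) := by nlinarith [pow_pos (three_pos (α := ℝ)) d]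
  · obtain ⟨n, hxn⟩ := Set.mem_iUnion.mp (hAU hx)
    have hn : (U n).Nonempty := ⟨x, hxn⟩
    have hdist : dist x (y n) ≤ (2 ^ f n)⁻¹ := (edist_le_ofReal (by positivity)).mp
      ((edist_le_ediam_of_mem hxn (hy n hn)).trans (hf n).2)
    simp only [Set.mem_iUnion, exists_prop]
    exact ⟨f n, (hf n).1, dyIdx d (f n) x, Finset.mem_biUnion.mpr
      ⟨n, hI n hn, dyIdx_mem_Icc_of_dist_le hdist⟩, mem_dyCube_dyIdx x⟩

theorem entropy_to_hausdorff_dim_general (d : ℕ) (α : ℝ)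
    (μ : Measure (EuclideanSpace ℝ (Fin d)))
    (h : ∃ m₀ : ℕ, ∀ m : ℕ, m₀ ≤ m → ∀ B : Set (EuclideanSpace ℝ (Fin d)),
      MeasurableSet B → ENNReal.ofReal (1 / (m : ℝ) ^ 2) ≤ μ B →
      ∃ ν : Measure (EuclideanSpace ℝ (Fin d)), IsProbabilityMeasure ν ∧ ν Bᶜ = 0 ∧
        α * m ≤ dyEntropy d m ν) :
    ∀ A : Set (EuclideanSpace ℝ (Fin d)), MeasurableSet A → 0 < μ A →
      ENNReal.ofReal α ≤ dimH A := by
  obtain ⟨m₀, hm₀⟩ := h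
  intro A _ hμA
  by_contra! hdim
  obtain ⟨s, hAs, hsα⟩ := ENNReal.lt_iff_exists_nnreal_btwn.mp hdim
  have hgap : ∀ᶠ m : ℕ in atTop, s * m + Real.logb 2 (2 * 3 ^ d) < α * m := by
    filter_upwards [(tendsto_natCast_atTop_atTop.const_mul_atTop (sub_pos.mpr
      (coe_lt_ofReal.mp hsα))).eventually_gt_atTop (Real.logb 2 (2 * 3 ^ d))] with m hm
    linarith
  set w : ℕ → ℝ≥0∞ := fun m => ENNReal.ofReal (1 / (m : ℝ) ^ 2)
  have hw : ∑' m, w m ≠ ∞ := by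
    rw [← ENNReal.ofReal_tsum_of_nonneg (fun _ => by positivity)
      (Real.summable_one_div_nat_pow.mpr one_lt_two)]
    exact ofReal_ne_top
  obtain ⟨M, hM₀, hMgap, hMtail⟩ := ((eventually_ge_atTop m₀).and
    ((eventually_forall_ge_atTop.mpr hgap).and
      ((ENNReal.tendsto_sum_nat_add w hw).eventually_lt_const hμA))).exists
  obtain ⟨K, hK, hAK⟩ := exists_dyCube_cover_of_hausdorffMeasure_eq_zero s.coe_nonneg
    (hausdorffMeasure_of_dimH_lt hAs) M
  obtain ⟨m, hm, hμB⟩ := exists_le_measure_of_tsum_tail_lt μ hAK hMtail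
  obtain ⟨ν, hν, hνB, hent⟩ := hm₀ m (hM₀.trans hm) _
    ((K m).measurableSet_biUnion fun k _ => measurableSet_dyCube k) hμB
  have hH := dyEntropy_le_logb_of_card_le hνB (hK m)
  rw [Real.logb_mul (by positivity) (by positivity), Real.logb_rpow two_pos one_lt_two.ne'] at hH
  linarith [hMgap m hm]

/-- If a Borel probability measure `μ` on `ℝ^d` is such that for every
sufficiently large `m` and every Borel set `B` with `μ(B) ≥ m^{-2}` there is a probability
measure `ν` supported on `B` with `H(ν, D_m) ≥ α m`, then every Borel set `A` with
`μ(A) > 0` has Hausdorff dimension at least `α`. -/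
theorem entropy_to_hausdorff_dim (d : ℕ) (α : ℝ)
    (μ : Measure (EuclideanSpace ℝ (Fin d))) [IsProbabilityMeasure μ]
    (h : ∃ m₀ : ℕ, ∀ m : ℕ, m₀ ≤ m → ∀ B : Set (EuclideanSpace ℝ (Fin d)),
      MeasurableSet B → ENNReal.ofReal (1 / (m : ℝ) ^ 2) ≤ μ B →
      ∃ ν : Measure (EuclideanSpace ℝ (Fin d)), IsProbabilityMeasure ν ∧ ν Bᶜ = 0 ∧
        α * m ≤ dyEntropy d m ν) :
    ∀ A : Set (EuclideanSpace ℝ (Fin d)), MeasurableSet A → 0 < μ A →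
      ENNReal.ofReal α ≤ dimH A :=
  entropy_to_hausdorff_dim_general d α μ h
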